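/- Fix x ∈ ℝ₊^R and consider the convex set 𝒟 = {D ∈ ℝ^R : D_ij = 0 for all ij ∈ Λ₂(x) and D_ij ≥ 0 for all ij ∈ Λ₁(x)}. Then the function D ↦ L(x,D) is finite, nonnegative, continuous and strictly convex on 𝒟, and for every K ≥ 0 the level set {D ∈ 𝒟 : L(x,D) ≤ K} is compact. -/

import Mathlib

open Classical Filter MeasureTheory
open scoped ENNReal

noncomputable section

/-- The M/M/1 cost `l(D‖λ,μ)` that a suitably normalized `M/M/1` queue with arrival rate
`λ` and service rate `μ` follows the drift `D`.  (Lean's conventions `Real.log 0 = 0` and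
`0 * y = 0` implement the convention `0 · log 0 = 0`.) -/
def mmCost (D lam mu : ℝ) : ℝ :=
  D * Real.log ((D + Real.sqrt (D ^ 2 + 4 * lam * mu)) / (2 * lam))
    + lam + mu - Real.sqrt (D ^ 2 + 4 * lam * mu)

/-- The relative entropy `I_p(ν‖λ)` of Poisson processes of intensities `ν` and `λ`.
(Lean's conventions `x / 0 = 0`, `Real.log 0 = 0` and `0 * y = 0` implement the
conventions `0/0 = 0` and `0 · log 0 = 0`.) -/
def poissonEntropy (nu lam : ℝ) : ℝ := nu * Real.log (nu / lam) - nu + lam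

/-- A star network: a finite set `S` of channels with capacities `C i > 0`, and a set `R`
of routes, each route `r` being an unordered pair of distinct channels
`{fst r, snd r}`, with arrival rates `lam r > 0` and service parameters `mu r > 0`. -/
structure StarNetwork (S R : Type*) where
  /-- one endpoint of a route -/
  fst : R → S
  /-- the other endpoint of a route -/
  snd : R → S
  fst_ne_snd : ∀ r, fst r ≠ snd r
  /-- the capacity of each channel -/
  C : S → ℝ
  C_pos : ∀ i, 0 < C i
  /-- the arrival rate on each route -/
  lam : R → ℝ
  lam_pos : ∀ r, 0 < lam r
  /-- the service parameter of each route -/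
  mu : R → ℝ
  mu_pos : ∀ r, 0 < mu r

namespace StarNetwork

variable {S R : Type*} [Fintype S] [Fintype R]

/-- `N.touches i r` means that channel `i` is one of the two endpoints of route `r`. -/
def touches (N : StarNetwork S R) (i : S) (r : R) : Prop :=
  N.fst r = i ∨ N.snd r = i

/-- The load `x_i = ∑_{j : ij ∈ R} x_ij` of channel `i`. -/
def load (N : StarNetwork S R) (x : R → ℝ) (i : S) : ℝ :=
  ∑ r : R, if N.touches i r then x r else 0

/-- The service rate `μ_ij(x) = μ_ij · x_ij · min (C_i / x_i) (C_j / x_j)` if `x_ij > 0`,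
and `μ_ij(x) = 0` if `x_ij = 0`. -/
def srv (N : StarNetwork S R) (x : R → ℝ) (r : R) : ℝ :=
  if 0 < x r then
    N.mu r * x r *
      min (N.C (N.fst r) / N.load x (N.fst r)) (N.C (N.snd r) / N.load x (N.snd r))
  else 0

/-- The face `Λ(x) = {ij ∈ R : x_ij > 0}` of saturated routes. -/
def face (N : StarNetwork S R) (x : R → ℝ) : Set R := {r | 0 < x r}

/-- The jammed routes `Λ₁(x)`: routes `ij` with `x_ij = 0` such that some route of
`Λ(x)` contains `i` or contains `j`. -/
def jammed (N : StarNetwork S R) (x : R → ℝ) : Set R :=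
  {r | x r = 0 ∧ ∃ r' ∈ N.face x, N.touches (N.fst r) r' ∨ N.touches (N.snd r) r'}

/-- The ergodic routes `Λ₂(x) = R \ (Λ(x) ∪ Λ₁(x))`. -/
def ergodicRoutes (N : StarNetwork S R) (x : R → ℝ) : Set R :=
  (N.face x ∪ N.jammed x)ᶜ

/-- The local rate function `L(x, D) = ∑_{ij ∈ Λ(x) ∪ Λ₁(x)} l(D_ij ‖ λ_ij, μ_ij(x))`
(its finite part; `L(x,D) = +∞` when `D_ij < 0` for some `ij ∉ Λ(x)`). -/
def locRate (N : StarNetwork S R) (x D : R → ℝ) : ℝ :=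
  ∑ r : R, if r ∈ N.face x ∪ N.jammed x then mmCost (D r) (N.lam r) (N.srv x r) else 0

/-- The sample path rate function `I_T(φ) = ∫₀ᵀ L(φ(t), φ̇(t)) dt ∈ [0,∞]` if `φ` is
absolutely continuous on `[0,T]`, and `I_T(φ) = +∞` otherwise (the infimum over an
empty family is `⊤`; any two densities of `φ` coincide a.e. on `[0,T]`, so the
infimum is the common value of the integral). -/
def pathRate (N : StarNetwork S R) (T : ℝ) (φ : ℝ → R → ℝ) : ℝ≥0∞ :=
  ⨅ (f : ℝ → R → ℝ) (_ : IntegrableOn f (Set.Icc 0 T))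
    (_ : ∀ t ∈ Set.Icc (0 : ℝ) T, φ t = φ 0 + ∫ s in (0 : ℝ)..t, f s),
    ∫⁻ t in Set.Ioc (0 : ℝ) T, ENNReal.ofReal (N.locRate (φ t) (f t))

end StarNetwork

/-!
The summand `l(·‖λ,μ)` is the Legendre transform of the cumulant
`Λ(θ) = λ(e^θ - 1) + μ(e^{-θ} - 1)`, and at a drift `t = Λ'(η)` the supremum is attained exactly
at `θ = η` (the gap is a sum of terms `c (e^u - u - 1)`). Every admissible drift is of this form,
except `t = 0` when `μ = 0`. Testing with `θ = 0` and `θ = ±1` gives nonnegativity and the bound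
`|t| ≤ l(t) + (λ + μ) e`; testing a convex combination `t` of `t₁ ≠ t₂` with its own tilt `η`,
which is strictly suboptimal at `t₁`, gives strict convexity.

On `𝒟 = ∏ᵣ Dᵣ`, with `Dᵣ = ℝ`, `[0, ∞)`, `{0}` on face, jammed and ergodic routes, `L(x, ·)` is
a separable sum of such one-dimensional functions (with `μ_r(x) > 0` on the face and
`μ_r(x) = 0` on jammed routes), and inherits all four properties from its summands.
-/

open Real Set

/-- The cumulant generating function of the net flow of an M/M/1 queue with arrival rate `lam`
and service rate `mu`; `mmCost t lam mu` is its Legendre transform at `t`. -/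
def mmCumulant (lam mu θ : ℝ) : ℝ := lam * (exp θ - 1) + mu * (exp (-θ) - 1)

section MMCost

variable {lam mu t θ η : ℝ}

lemma add_sqrt_sq_add_pos {c : ℝ} (h : 0 < c ∨ 0 < t) : 0 < t + √(t ^ 2 + c) := by
  rcases h with hc | ht
  · have hs : t ^ 2 < √(t ^ 2 + c) ^ 2 := by rw [sq_sqrt (by positivity)]; linarith
    nlinarith [abs_lt_of_sq_lt_sq' hs (sqrt_nonneg _)]
  · positivity

lemma mmCumulant_add_lt (hl : 0 < lam) (hm : 0 ≤ mu) (h : θ ≠ η) :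
    mmCumulant lam mu η + (lam * exp η - mu * exp (-η)) * (θ - η) < mmCumulant lam mu θ := by
  have h₁ : 0 < lam * exp η * (exp (θ - η) - (θ - η) - 1) :=
    mul_pos (by positivity) (by linarith [add_one_lt_exp (sub_ne_zero.2 h)])
  have h₂ : 0 ≤ mu * exp (-η) * (exp (η - θ) - (η - θ) - 1) :=
    mul_nonneg (by positivity) (by linarith [add_one_le_exp (η - θ)])
  have e₁ : exp θ = exp η * exp (θ - η) := by rw [← exp_add]; ring_nf
  have e₂ : exp (-θ) = exp (-η) * exp (η - θ) := by rw [← exp_add]; ring_nf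
  rw [mmCumulant, mmCumulant, e₁, e₂]
  linarith

lemma mmCost_tilt (hl : 0 < lam) (hm : 0 ≤ mu) (η : ℝ) :
    mmCost (lam * exp η - mu * exp (-η)) lam mu
      = η * (lam * exp η - mu * exp (-η)) - mmCumulant lam mu η := by
  have hη : exp η * exp (-η) = 1 := by rw [← exp_add]; simp
  have hs : √((lam * exp η - mu * exp (-η)) ^ 2 + 4 * lam * mu)
      = lam * exp η + mu * exp (-η) := by
    rw [show (lam * exp η - mu * exp (-η)) ^ 2 + 4 * lam * mu
        = (lam * exp η + mu * exp (-η)) ^ 2 by linear_combination (-4 * lam * mu) * hη,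
      sqrt_sq (by positivity)]
  have hy : (lam * exp η - mu * exp (-η) + (lam * exp η + mu * exp (-η))) / (2 * lam)
      = exp η := by field_simp; ring
  rw [mmCost, hs, hy, log_exp, mmCumulant]
  ring

lemma exists_mmTilt (hl : 0 < lam) (hm : 0 ≤ mu) (h : 0 < mu ∨ 0 < t) :
    ∃ η, lam * exp η - mu * exp (-η) = t := by
  set s := √(t ^ 2 + 4 * lam * mu)
  have hs : s ^ 2 = t ^ 2 + 4 * lam * mu := sq_sqrt (by positivity)
  have hts : 0 < t + s := add_sqrt_sq_add_pos (h.imp_left fun hm => by positivity)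
  have hy : 0 < (t + s) / (2 * lam) := by positivity
  refine ⟨log ((t + s) / (2 * lam)), ?_⟩
  rw [exp_neg, exp_log hy]
  field_simp
  linear_combination hs

lemma mmCost_zero_zero : mmCost 0 lam 0 = lam := by simp [mmCost]

lemma sub_mmCumulant_lt_mmCost (hl : 0 < lam) (hm : 0 ≤ mu) (h : 0 < mu ∨ 0 ≤ t)
    (hθ : lam * exp θ - mu * exp (-θ) ≠ t) : θ * t - mmCumulant lam mu θ < mmCost t lam mu := by
  by_cases h' : 0 < mu ∨ 0 < t
  · obtain ⟨η, rfl⟩ := exists_mmTilt hl hm h'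
    have hθη : θ ≠ η := by rintro rfl; exact hθ rfl
    rw [mmCost_tilt hl hm]
    linarith [mmCumulant_add_lt hl hm hθη]
  · obtain ⟨rfl, rfl⟩ : mu = 0 ∧ t = 0 := by
      push Not at h'; exact ⟨le_antisymm h'.1 hm, le_antisymm h'.2 (h.resolve_left h'.1.not_gt)⟩
    rw [mmCost_zero_zero, mmCumulant]
    nlinarith [mul_pos hl (exp_pos θ)]

lemma sub_mmCumulant_le_mmCost (hl : 0 < lam) (hm : 0 ≤ mu) (h : 0 < mu ∨ 0 ≤ t) (θ : ℝ) :
    θ * t - mmCumulant lam mu θ ≤ mmCost t lam mu := by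
  by_cases hθ : lam * exp θ - mu * exp (-θ) = t
  · rw [← hθ, mmCost_tilt hl hm]
  · exact (sub_mmCumulant_lt_mmCost hl hm h hθ).le

lemma mmCost_nonneg (hl : 0 < lam) (hm : 0 ≤ mu) (h : 0 < mu ∨ 0 ≤ t) :
    0 ≤ mmCost t lam mu := by
  simpa [mmCumulant] using sub_mmCumulant_le_mmCost hl hm h 0

lemma abs_le_mmCost_add (hl : 0 < lam) (hm : 0 ≤ mu) (h : 0 < mu ∨ 0 ≤ t) :
    |t| ≤ mmCost t lam mu + (lam + mu) * exp 1 := by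
  have h₁ := sub_mmCumulant_le_mmCost hl hm h 1
  have h₂ := sub_mmCumulant_le_mmCost hl hm h (-1)
  have he : exp (-1) ≤ exp 1 := exp_le_exp.2 (by norm_num)
  simp only [mmCumulant, neg_neg] at h₁ h₂
  rw [abs_le]
  constructor <;> nlinarith [mul_le_mul_of_nonneg_left he hl.le, mul_le_mul_of_nonneg_left he hm]

lemma mul_add_mul_pos_of_ne {t₁ t₂ a b : ℝ} (h₁ : 0 ≤ t₁) (h₂ : 0 ≤ t₂) (hne : t₁ ≠ t₂)
    (ha : 0 < a) (hb : 0 < b) : 0 < a * t₁ + b * t₂ := by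
  rcases h₁.lt_or_eq with h₁ | rfl
  · positivity
  · have : 0 < t₂ := h₂.lt_of_ne hne
    positivity

lemma strictConvexOn_mmCost (hl : 0 < lam) (hm : 0 ≤ mu) {s : Set ℝ} (hs : Convex ℝ s)
    (hadm : ∀ t ∈ s, 0 < mu ∨ 0 ≤ t) : StrictConvexOn ℝ s (mmCost · lam mu) := by
  refine ⟨hs, fun t₁ h₁ t₂ h₂ hne a b ha hb hab => ?_⟩
  simp only [smul_eq_mul]
  have hc : 0 < mu ∨ 0 < a * t₁ + b * t₂ := by
    rcases hadm t₁ h₁ with hm' | h₁ <;> rcases hadm t₂ h₂ with hm' | h₂ <;>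
      first | exact Or.inl hm' | exact Or.inr (mul_add_mul_pos_of_ne h₁ h₂ hne ha hb)
  obtain ⟨η, hη⟩ := exists_mmTilt hl hm hc
  have hη₁ : lam * exp η - mu * exp (-η) ≠ t₁ := by
    rw [hη]; intro h; apply hne
    have : b * (t₂ - t₁) = 0 := by linear_combination h - t₁ * hab
    linarith [(mul_eq_zero.1 this).resolve_left hb.ne']
  have k₁ := mul_lt_mul_of_pos_left (sub_mmCumulant_lt_mmCost hl hm (hadm t₁ h₁) hη₁) ha
  have k₂ := mul_le_mul_of_nonneg_left (sub_mmCumulant_le_mmCost hl hm (hadm t₂ h₂) η) hb.le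
  have hdual := mmCost_tilt hl hm η
  rw [hη] at hdual
  have hsplit : a * (η * t₁ - mmCumulant lam mu η) + b * (η * t₂ - mmCumulant lam mu η)
      = η * (a * t₁ + b * t₂) - mmCumulant lam mu η := by
    linear_combination (-mmCumulant lam mu η) * hab
  linarith

lemma continuous_mmCost (hl : 0 < lam) (hm : 0 ≤ mu) : Continuous (mmCost · lam mu) := by
  have hsqrt : Continuous fun t : ℝ => √(t ^ 2 + 4 * lam * mu) := by fun_prop
  rcases hm.lt_or_eq with hm | rfl
  · have hlog : Continuous fun t : ℝ => log ((t + √(t ^ 2 + 4 * lam * mu)) / (2 * lam)) :=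
      ((continuous_id.add hsqrt).div_const _).log fun t =>
        (div_pos (add_sqrt_sq_add_pos (Or.inl (by positivity))) (by positivity)).ne'
    exact ((continuous_id.mul hlog).add continuous_const |>.add continuous_const).sub hsqrt
  · -- `m log m` with `m = max t 0` absorbs both the junk value `log 0 = 0` and the kink at `0`.
    have heq : (mmCost · lam 0)
        = fun t => max t 0 * log (max t 0) - max t 0 * log lam + lam - |t| := by
      funext t
      rcases le_or_gt t 0 with ht | ht
      · simp [mmCost, max_eq_right ht, sqrt_sq_eq_abs, abs_of_nonpos ht]
      · simp only [mmCost, mul_zero, add_zero]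
        rw [max_eq_left ht.le, abs_of_pos ht, sqrt_sq ht.le,
          show (t + t) / (2 * lam) = t / lam by ring, log_div ht.ne' hl.ne']
        ring
    rw [heq]
    fun_prop

end MMCost

section SeparableSum

variable {ι : Type*} [Fintype ι]

lemma strictConvexOn_univ_pi_sum {I : ι → Set ℝ} {g : ι → ℝ → ℝ}
    (hg : ∀ i, StrictConvexOn ℝ (I i) (g i)) :
    StrictConvexOn ℝ (univ.pi I) fun D => ∑ i, g i (D i) := by
  refine ⟨convex_pi fun i _ => (hg i).1, fun D hD E hE hne a b ha hb hab => ?_⟩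
  obtain ⟨i₀, hi₀⟩ := Function.ne_iff.1 hne
  simp only [Pi.add_apply, Pi.smul_apply, smul_eq_mul, Finset.mul_sum, ← Finset.sum_add_distrib]
  refine Finset.sum_lt_sum (fun i _ => ?_) ⟨i₀, Finset.mem_univ _, ?_⟩
  · exact (hg i).convexOn.2 (hD i (mem_univ i)) (hE i (mem_univ i)) ha.le hb.le hab
  · exact (hg i₀).2 (hD i₀ (mem_univ i₀)) (hE i₀ (mem_univ i₀)) hi₀ ha hb hab

lemma isCompact_univ_pi_sum_sublevel {X : ι → Type*} [∀ i, TopologicalSpace (X i)]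
    {I : ∀ i, Set (X i)} {g : ∀ i, X i → ℝ} (hI : ∀ i, IsClosed (I i))
    (hg : ∀ i, Continuous (g i)) (hg₀ : ∀ i, ∀ t ∈ I i, 0 ≤ g i t) {K : ℝ}
    (hK : ∀ i, IsCompact {t ∈ I i | g i t ≤ K}) :
    IsCompact {D ∈ univ.pi I | ∑ i, g i (D i) ≤ K} := by
  refine (isCompact_univ_pi hK).of_isClosed_subset ?_ fun D ⟨hD, hDK⟩ i _ => ⟨hD i (mem_univ i), ?_⟩
  · exact (isClosed_set_pi fun i _ => hI i).inter
      (isClosed_le (continuous_finsetSum _ fun i _ => (hg i).comp (continuous_apply i))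
        continuous_const)
  · exact le_trans (Finset.single_le_sum (fun j _ => hg₀ j (D j) (hD j (mem_univ j)))
      (Finset.mem_univ i)) hDK

end SeparableSum

namespace StarNetwork

variable {S R : Type*} (N : StarNetwork S R) {x : R → ℝ}

def routeDom (x : R → ℝ) (r : R) : Set ℝ :=
  if r ∈ N.face x then univ else if r ∈ N.jammed x then Ici 0 else {0}

lemma setOf_eq_univ_pi_routeDom :
    {D : R → ℝ | (∀ r ∈ N.ergodicRoutes x, D r = 0) ∧ ∀ r ∈ N.jammed x, 0 ≤ D r}
      = univ.pi (N.routeDom x) := by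
  ext D
  simp only [mem_univ_pi, routeDom, ergodicRoutes, mem_compl_iff, mem_union]
  constructor
  · rintro ⟨herg, hjam⟩ r
    split_ifs with hf hj
    exacts [mem_univ _, hjam r hj, herg r (by tauto)]
  · intro hD
    refine ⟨fun r hr => ?_, fun r hr => ?_⟩
    · simpa [if_neg (not_or.1 hr).1, if_neg (not_or.1 hr).2] using hD r
    · have hf : r ∉ N.face x := fun h : 0 < x r => h.ne' hr.1
      simpa [if_neg hf, if_pos hr] using hD r

variable [Fintype R]

lemma load_pos (hx : ∀ r, 0 ≤ x r) {r : R} {i : S} (hi : N.touches i r) (hr : 0 < x r) :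
    0 < N.load x i :=
  hr.trans_le <| by
    simpa [load, hi] using Finset.single_le_sum (f := fun r' => if N.touches i r' then x r' else 0)
      (fun r' _ => by split_ifs <;> simp [hx r']) (Finset.mem_univ r)

lemma srv_pos (hx : ∀ r, 0 ≤ x r) {r : R} (hr : r ∈ N.face x) : 0 < N.srv x r := by
  have hr' : 0 < x r := hr
  rw [srv, if_pos hr']
  exact mul_pos (mul_pos (N.mu_pos r) hr') (lt_min
    (div_pos (N.C_pos _) (N.load_pos hx (Or.inl rfl) hr'))
    (div_pos (N.C_pos _) (N.load_pos hx (Or.inr rfl) hr')))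

def routeCost (x : R → ℝ) (r : R) (t : ℝ) : ℝ :=
  if r ∈ N.face x ∪ N.jammed x then mmCost t (N.lam r) (N.srv x r) else 0

lemma routeCost_cases (hx : ∀ r, 0 ≤ x r) (r : R) :
    (N.routeDom x r = {0} ∧ N.routeCost x r = 0) ∨
    (N.routeCost x r = (mmCost · (N.lam r) (N.srv x r)) ∧ 0 ≤ N.srv x r ∧
      Convex ℝ (N.routeDom x r) ∧ IsClosed (N.routeDom x r) ∧
      ∀ t ∈ N.routeDom x r, 0 < N.srv x r ∨ 0 ≤ t) := by
  by_cases hf : r ∈ N.face x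
  · have hs := N.srv_pos hx hf
    have hdom : N.routeDom x r = univ := if_pos hf
    rw [hdom]
    exact Or.inr ⟨funext fun _ => if_pos (Or.inl hf), hs.le, convex_univ, isClosed_univ,
      fun _ _ => Or.inl hs⟩
  by_cases hj : r ∈ N.jammed x
  · have hdom : N.routeDom x r = Ici 0 := by simp only [routeDom, if_neg hf, if_pos hj]
    have hs : N.srv x r = 0 := if_neg hf
    rw [hdom, hs]
    exact Or.inr ⟨funext fun _ => (if_pos (Or.inr hj)).trans (by rw [hs]), le_rfl,
      convex_Ici 0, isClosed_Ici, fun _ ht => Or.inr ht⟩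
  · have hdom : N.routeDom x r = {0} := by simp only [routeDom, if_neg hf, if_neg hj]
    exact Or.inl ⟨hdom, funext fun _ => if_neg (not_or.2 ⟨hf, hj⟩)⟩

lemma continuous_routeCost (hx : ∀ r, 0 ≤ x r) (r : R) : Continuous (N.routeCost x r) := by
  rcases N.routeCost_cases hx r with ⟨-, h⟩ | ⟨h, hm, -⟩ <;> rw [h]
  exacts [continuous_const, continuous_mmCost (N.lam_pos r) hm]

lemma routeCost_nonneg (hx : ∀ r, 0 ≤ x r) (r : R) :
    ∀ t ∈ N.routeDom x r, 0 ≤ N.routeCost x r t := by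
  rcases N.routeCost_cases hx r with ⟨-, h⟩ | ⟨h, hm, -, -, hadm⟩ <;> intro t ht <;> rw [h]
  exacts [le_rfl, mmCost_nonneg (N.lam_pos r) hm (hadm t ht)]

lemma strictConvexOn_routeCost (hx : ∀ r, 0 ≤ x r) (r : R) :
    StrictConvexOn ℝ (N.routeDom x r) (N.routeCost x r) := by
  rcases N.routeCost_cases hx r with ⟨hdom, -⟩ | ⟨h, hm, hconv, -, hadm⟩
  · rw [hdom]
    exact ⟨convex_singleton 0, fun s hs t ht hne => absurd (hs.trans ht.symm) hne⟩
  · rw [h]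
    exact strictConvexOn_mmCost (N.lam_pos r) hm hconv hadm

lemma isClosed_routeDom (hx : ∀ r, 0 ≤ x r) (r : R) : IsClosed (N.routeDom x r) := by
  rcases N.routeCost_cases hx r with ⟨hdom, -⟩ | ⟨-, -, -, hclosed, -⟩
  exacts [hdom ▸ isClosed_singleton, hclosed]

lemma isCompact_routeCost_sublevel (hx : ∀ r, 0 ≤ x r) (r : R) (K : ℝ) :
    IsCompact {t ∈ N.routeDom x r | N.routeCost x r t ≤ K} := by
  rcases N.routeCost_cases hx r with ⟨hdom, -⟩ | ⟨h, hm, -, hclosed, hadm⟩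
  · exact (subsingleton_singleton.anti fun t ht => hdom ▸ ht.1).isCompact
  · rw [h]
    let c := K + (N.lam r + N.srv x r) * exp 1
    refine (isCompact_Icc (a := -c) (b := c)).of_isClosed_subset
      (hclosed.inter (isClosed_le (continuous_mmCost (N.lam_pos r) hm) continuous_const))
      fun t ⟨ht, htK⟩ => abs_le.1 ?_
    linarith [abs_le_mmCost_add (N.lam_pos r) hm (hadm t ht)]

end StarNetwork

theorem locRate_props_general {S R : Type*} [Fintype R]
    (N : StarNetwork S R) (x : R → ℝ) (hx : ∀ r, 0 ≤ x r)
    (𝒟 : Set (R → ℝ))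
    (h𝒟 : 𝒟 = {D | (∀ r ∈ N.ergodicRoutes x, D r = 0) ∧ ∀ r ∈ N.jammed x, 0 ≤ D r}) :
    (∀ D ∈ 𝒟, 0 ≤ N.locRate x D) ∧
    ContinuousOn (N.locRate x) 𝒟 ∧
    StrictConvexOn ℝ 𝒟 (N.locRate x) ∧
    ∀ K : ℝ, 0 ≤ K → IsCompact {D ∈ 𝒟 | N.locRate x D ≤ K} := by
  have hsum : N.locRate x = fun D => ∑ r, N.routeCost x r (D r) := rfl
  rw [h𝒟, N.setOf_eq_univ_pi_routeDom, hsum]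
  refine ⟨fun D hD => Finset.sum_nonneg fun r _ => N.routeCost_nonneg hx r _ (hD r (mem_univ r)),
    (continuous_finsetSum _ fun r _ =>
      (N.continuous_routeCost hx r).comp (continuous_apply r)).continuousOn,
    strictConvexOn_univ_pi_sum (N.strictConvexOn_routeCost hx),
    fun K _ => isCompact_univ_pi_sum_sublevel (N.isClosed_routeDom hx) (N.continuous_routeCost hx)
      (N.routeCost_nonneg hx) (N.isCompact_routeCost_sublevel hx · K)⟩

/-- Fix `x ∈ ℝ₊^R` and consider the convex set
`𝒟 = {D ∈ ℝ^R : D_ij = 0 ∀ ij ∈ Λ₂(x), D_ij ≥ 0 ∀ ij ∈ Λ₁(x)}`.  Then `D ↦ L(x,D)` is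
(finite,) nonnegative, continuous and strictly convex on `𝒟`, and for every `K ≥ 0` the
level set `{D ∈ 𝒟 : L(x,D) ≤ K}` is compact. -/
theorem locRate_props {S R : Type*} [Fintype S] [Fintype R]
    (N : StarNetwork S R) (x : R → ℝ) (hx : ∀ r, 0 ≤ x r)
    (𝒟 : Set (R → ℝ))
    (h𝒟 : 𝒟 = {D | (∀ r ∈ N.ergodicRoutes x, D r = 0) ∧ ∀ r ∈ N.jammed x, 0 ≤ D r}) :
    (∀ D ∈ 𝒟, 0 ≤ N.locRate x D) ∧
    ContinuousOn (N.locRate x) 𝒟 ∧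
    StrictConvexOn ℝ 𝒟 (N.locRate x) ∧
    ∀ K : ℝ, 0 ≤ K → IsCompact {D ∈ 𝒟 | N.locRate x D ≤ K} :=
  locRate_props_general N x hx 𝒟 h𝒟
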